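/- For every t > 1, the series C_2(t) := Σ_{n≥1} 2 t^{2n}/(1 - t^n)^4 converges, and as t → 1^+ one has C_2(t) = π^4/(45 (t-1)^4) + O((t-1)^{-3}). -/

import Mathlib

/-!
Write `t = eˣ`. The `n`-th term is `2 g(n x)` with `g(y) = e^{2y} / (e^y - 1)⁴ = (2 sinh (y/2))⁻⁴`,
and `y ≤ 2 sinh (y/2)` together with `e^{-y} ≥ 1 - y` give `|g(y) - y⁻⁴| ≤ 2 y⁻³` for `y > 0`.
Summing, `C₂(t)` differs from `2 ζ(4) x⁻⁴ = π⁴ / (45 x⁴)` by at most `4 ζ(3) x⁻³`. Finally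
`(t - 1) / t ≤ log t ≤ t - 1` trades powers of `(log t)⁻¹` for powers of `(t - 1)⁻¹` at the cost
of `O((t - 1)⁻³)`.
-/

open Real Filter Asymptotics Topology

noncomputable def c₂Kernel (y : ℝ) : ℝ := exp (2 * y) / (exp y - 1) ^ 4

noncomputable def c₂Term (t : ℝ) (n : ℕ) : ℝ := 2 * t ^ (2 * (n + 1)) / (1 - t ^ (n + 1)) ^ 4

lemma mul_exp_half_le_exp_sub_one {y : ℝ} (hy : 0 ≤ y) : y * exp (y / 2) ≤ exp y - 1 := by
  have hsinh : y / 2 ≤ sinh (y / 2) := self_le_sinh_iff.mpr (by linarith)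
  have hsplit : exp y - 1 = 2 * sinh (y / 2) * exp (y / 2) := by
    have h1 : exp (y / 2) * exp (y / 2) = exp y := by rw [← exp_add, add_halves]
    have h2 : exp (-(y / 2)) * exp (y / 2) = 1 := by rw [← exp_add, neg_add_cancel, exp_zero]
    rw [sinh_eq]
    linear_combination -h1 + h2
  rw [hsplit]
  exact mul_le_mul_of_nonneg_right (by linarith) (exp_pos _).le

lemma exp_sub_one_le_mul_exp (y : ℝ) : exp y - 1 ≤ y * exp y := by
  have h := add_one_le_exp (-y)
  have h1 : exp (-y) * exp y = 1 := by rw [← exp_add, neg_add_cancel, exp_zero]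
  nlinarith [exp_pos y]

lemma c₂Kernel_le {y : ℝ} (hy : 0 < y) : c₂Kernel y ≤ 1 / y ^ 4 := by
  have hlow := mul_exp_half_le_exp_sub_one hy.le
  have hpos : 0 < y * exp (y / 2) := by positivity
  have hden : 0 < exp y - 1 := by linarith [add_one_lt_exp hy.ne']
  have hexp : exp (2 * y) = exp (y / 2) ^ 4 := by rw [← exp_nat_mul]; ring_nf
  rw [c₂Kernel, hexp, div_le_div_iff₀ (by positivity) (by positivity), one_mul, ← mul_pow,
    mul_comm]
  exact pow_le_pow_left₀ hpos.le hlow 4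

lemma one_div_pow_four_sub_le_c₂Kernel {y : ℝ} (hy : 0 < y) :
    1 / y ^ 4 - 2 / y ^ 3 ≤ c₂Kernel y := by
  have hexp : exp (2 * y) = exp y ^ 2 := by rw [← exp_nat_mul]; ring_nf
  have hden : 0 < exp y - 1 := by linarith [add_one_lt_exp hy.ne']
  have hupper : (exp y - 1) ^ 4 ≤ (y * exp y) ^ 4 :=
    pow_le_pow_left₀ hden.le (exp_sub_one_le_mul_exp y) 4
  have htwo : (1 - 2 * y) * exp y ^ 2 ≤ 1 := by
    have h := add_one_le_exp (-(2 * y))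
    rw [exp_neg, hexp] at h
    have := mul_le_mul_of_nonneg_right h (by positivity : (0:ℝ) ≤ exp y ^ 2)
    rwa [inv_mul_cancel₀ (by positivity), show -(2 * y) + 1 = 1 - 2 * y by ring] at this
  have hlhs : 1 / y ^ 4 - 2 / y ^ 3 = (1 - 2 * y) / y ^ 4 := by field_simp
  rw [c₂Kernel, hlhs, hexp, div_le_div_iff₀ (by positivity) (by positivity)]
  rcases le_or_gt (1 - 2 * y) 0 with hneg | hpos
  · nlinarith [mul_nonpos_of_nonpos_of_nonneg hneg (by positivity : (0:ℝ) ≤ (exp y - 1) ^ 4),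
      (by positivity : (0:ℝ) ≤ exp y ^ 2 * y ^ 4)]
  · calc (1 - 2 * y) * (exp y - 1) ^ 4 ≤ (1 - 2 * y) * (y * exp y) ^ 4 :=
          mul_le_mul_of_nonneg_left hupper hpos.le
      _ = ((1 - 2 * y) * exp y ^ 2) * (exp y ^ 2 * y ^ 4) := by ring
      _ ≤ 1 * (exp y ^ 2 * y ^ 4) := mul_le_mul_of_nonneg_right htwo (by positivity)
      _ = exp y ^ 2 * y ^ 4 := one_mul _

lemma abs_c₂Kernel_sub_le {y : ℝ} (hy : 0 < y) : |c₂Kernel y - 1 / y ^ 4| ≤ 2 / y ^ 3 := by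
  rw [abs_sub_le_iff]
  constructor
  · linarith [c₂Kernel_le hy, (by positivity : 0 ≤ 2 / y ^ 3)]
  · linarith [one_div_pow_four_sub_le_c₂Kernel hy]

lemma c₂Term_eq {t : ℝ} (ht : 0 < t) (n : ℕ) :
    c₂Term t n = 2 * c₂Kernel ((n + 1) * log t) := by
  have hpow : ∀ k : ℕ, t ^ k = exp (k * log t) := fun k => by
    rw [exp_nat_mul, exp_log ht]
  rw [c₂Term, c₂Kernel, hpow, hpow]
  push_cast
  ring_nf

lemma hasSum_two_div_succ_mul_pow_four (x : ℝ) :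
    HasSum (fun n : ℕ => 2 / ((n + 1) * x) ^ 4) (π ^ 4 / (45 * x ^ 4)) := by
  have hzeta : HasSum (fun n : ℕ => 1 / ((n : ℝ) + 1) ^ 4) (π ^ 4 / 90) := by
    simpa using (hasSum_nat_add_iff' 1).mpr hasSum_zeta_four
  rw [show π ^ 4 / (45 * x ^ 4) = 2 / x ^ 4 * (π ^ 4 / 90) by ring]
  exact (hzeta.mul_left _).congr_fun fun n => by rw [mul_pow, div_mul_div_comm, mul_one, mul_comm]

lemma hasSum_four_div_succ_mul_pow_three (x : ℝ) :
    HasSum (fun n : ℕ => 4 / ((n + 1) * x) ^ 3) ((∑' n : ℕ, 4 / ((n : ℝ) + 1) ^ 3) / x ^ 3) := by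
  have hsum : Summable (fun n : ℕ => 1 / ((n : ℝ) + 1) ^ 3) := by
    simpa using (summable_nat_add_iff 1).mpr (Real.summable_one_div_nat_pow.mpr (by norm_num))
  have h := (hsum.mul_left 4).hasSum.div_const (x ^ 3)
  simp only [mul_one_div] at h
  exact h.congr_fun fun n => by rw [mul_pow, div_div]

section Series

variable {x : ℝ}

lemma norm_two_mul_c₂Kernel_sub_le (hx : 0 < x) (n : ℕ) :
    ‖2 * c₂Kernel ((n + 1) * x) - 2 / ((n + 1) * x) ^ 4‖ ≤ 4 / ((n + 1) * x) ^ 3 := by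
  have h := abs_c₂Kernel_sub_le (by positivity : 0 < ((n : ℝ) + 1) * x)
  rw [Real.norm_eq_abs, show (2 : ℝ) / ((n + 1) * x) ^ 4 = 2 * (1 / ((n + 1) * x) ^ 4) by ring,
    ← mul_sub, abs_mul, abs_two]
  calc 2 * |c₂Kernel ((n + 1) * x) - 1 / ((n + 1) * x) ^ 4| ≤ 2 * (2 / ((n + 1) * x) ^ 3) := by
        gcongr
    _ = 4 / ((n + 1) * x) ^ 3 := by ring

lemma summable_c₂Kernel (hx : 0 < x) : Summable (fun n : ℕ => 2 * c₂Kernel ((n + 1) * x)) := by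
  have hdiff := (hasSum_four_div_succ_mul_pow_three x).summable.of_norm_bounded
    (norm_two_mul_c₂Kernel_sub_le hx)
  simpa using hdiff.add (hasSum_two_div_succ_mul_pow_four x).summable

lemma abs_tsum_c₂Kernel_sub_le (hx : 0 < x) :
    |∑' n : ℕ, 2 * c₂Kernel ((n + 1) * x) - π ^ 4 / (45 * x ^ 4)| ≤
      (∑' n : ℕ, 4 / ((n : ℝ) + 1) ^ 3) / x ^ 3 := by
  have hmain := hasSum_two_div_succ_mul_pow_four x
  rw [← hmain.tsum_eq, ← (summable_c₂Kernel hx).tsum_sub hmain.summable, ← Real.norm_eq_abs]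
  exact tsum_of_norm_bounded (hasSum_four_div_succ_mul_pow_three x)
    (norm_two_mul_c₂Kernel_sub_le hx)

end Series

lemma isBigO_tsum_c₂Term_sub :
    (fun t => ∑' n, c₂Term t n - π ^ 4 / (45 * log t ^ 4)) =O[𝓝[>] 1]
      (fun t => (log t ^ 3)⁻¹) := by
  refine IsBigO.of_bound (∑' n : ℕ, 4 / ((n : ℝ) + 1) ^ 3) ?_
  filter_upwards [self_mem_nhdsWithin] with t (ht : 1 < t)
  have hlog := log_pos ht
  rw [tsum_congr (c₂Term_eq (by linarith)), Real.norm_eq_abs, norm_of_nonneg (by positivity),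
    ← div_eq_mul_inv]
  exact abs_tsum_c₂Kernel_sub_le hlog

section LogComparison

variable {t : ℝ}

lemma inv_sub_one_le_inv_log (ht : 1 < t) : (t - 1)⁻¹ ≤ (log t)⁻¹ :=
  inv_anti₀ (log_pos ht) (log_le_sub_one_of_pos (by linarith))

lemma inv_log_le_mul_inv_sub_one (ht : 1 < t) : (log t)⁻¹ ≤ t * (t - 1)⁻¹ := by
  have hpos : 0 < 1 - t⁻¹ := sub_pos.mpr (inv_lt_one_of_one_lt₀ ht)
  calc (log t)⁻¹ ≤ (1 - t⁻¹)⁻¹ := inv_anti₀ hpos (one_sub_inv_le_log_of_pos (by linarith))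
    _ = t * (t - 1)⁻¹ := by field_simp

lemma isBigO_inv_log_pow_three :
    (fun t => (log t ^ 3)⁻¹) =O[𝓝[>] 1] (fun t => ((t - 1) ^ 3)⁻¹) := by
  refine IsBigO.of_bound 8 ?_
  filter_upwards [Ioo_mem_nhdsGT one_lt_two] with t ⟨ht1, ht2⟩
  have hD : 0 < (t - 1)⁻¹ := inv_pos.mpr (by linarith)
  have hlog := log_pos ht1
  rw [Real.norm_eq_abs, Real.norm_eq_abs, abs_of_pos (by positivity),
    abs_of_pos (by positivity), ← inv_pow, ← inv_pow]
  calc (log t)⁻¹ ^ 3 ≤ (t * (t - 1)⁻¹) ^ 3 := by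
        gcongr; exact inv_log_le_mul_inv_sub_one ht1
    _ = t ^ 3 * (t - 1)⁻¹ ^ 3 := mul_pow _ _ _
    _ ≤ 2 ^ 3 * (t - 1)⁻¹ ^ 3 := by gcongr
    _ = 8 * (t - 1)⁻¹ ^ 3 := by norm_num

lemma isBigO_inv_log_pow_four_sub :
    (fun t => (log t ^ 4)⁻¹ - ((t - 1) ^ 4)⁻¹) =O[𝓝[>] 1] (fun t => ((t - 1) ^ 3)⁻¹) := by
  refine IsBigO.of_bound 15 ?_
  filter_upwards [Ioo_mem_nhdsGT one_lt_two] with t ⟨ht1, ht2⟩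
  have hD : 0 < (t - 1)⁻¹ := inv_pos.mpr (by linarith)
  have hlow := inv_sub_one_le_inv_log ht1
  have hup := inv_log_le_mul_inv_sub_one ht1
  have hlow4 : (t - 1)⁻¹ ^ 4 ≤ (log t)⁻¹ ^ 4 := by gcongr
  have hup4 : (log t)⁻¹ ^ 4 ≤ (t * (t - 1)⁻¹) ^ 4 := by gcongr; exact hD.le.trans hlow
  have hcancel : (t - 1) * (t - 1)⁻¹ = 1 := mul_inv_cancel₀ (by linarith)
  rw [Real.norm_eq_abs, Real.norm_eq_abs, ← inv_pow, ← inv_pow, ← inv_pow,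
    abs_of_nonneg (by linarith), abs_of_pos (by positivity)]
  calc (log t)⁻¹ ^ 4 - (t - 1)⁻¹ ^ 4 ≤ (t ^ 4 - 1) * (t - 1)⁻¹ ^ 4 := by
        rw [mul_pow] at hup4; linarith
    _ = (t ^ 3 + t ^ 2 + t + 1) * ((t - 1) * (t - 1)⁻¹) * (t - 1)⁻¹ ^ 3 := by ring
    _ ≤ 15 * (t - 1)⁻¹ ^ 3 := by rw [hcancel, mul_one]; gcongr; nlinarith

end LogComparison

theorem stmt_4 :
    (∀ t : ℝ, 1 < t →
      Summable (fun n : ℕ => 2 * t ^ (2 * (n + 1)) / (1 - t ^ (n + 1)) ^ 4)) ∧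
    Asymptotics.IsBigO (nhdsWithin 1 (Set.Ioi (1 : ℝ)))
      (fun t : ℝ =>
        (∑' n : ℕ, 2 * t ^ (2 * (n + 1)) / (1 - t ^ (n + 1)) ^ 4)
          - Real.pi ^ 4 / (45 * (t - 1) ^ 4))
      (fun t : ℝ => ((t - 1) ^ 3)⁻¹) := by
  refine ⟨fun t ht => ?_, ?_⟩
  · exact (summable_c₂Kernel (log_pos ht)).congr fun n => (c₂Term_eq (by linarith) n).symm
  · have hsplit := (isBigO_tsum_c₂Term_sub.trans isBigO_inv_log_pow_three).add
      (isBigO_inv_log_pow_four_sub.const_mul_left (π ^ 4 / 45))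
    refine hsplit.congr_left fun t => ?_
    simp only [c₂Term, div_eq_mul_inv, mul_inv]
    ring
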